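/- arXiv:2004.08004 — 9 statements merged into one kernel-verified Lean document; each statement's English description precedes it below -/
import Mathlib

section
/- Let F be a strictly causal operator ℓⁿ × ℓᵐ → ℓⁿ. A causal operator Ψ = (Ψˣ, Ψᵘ) : ℓⁿ → ℓⁿ × ℓᵐ is an achievable closed-loop map for F (i.e., there exists a causal controller K such that the closed loop x = F(x,u)+w, u = K(x) satisfies (x,u) = Ψ(w) for all w) if and only if Ψ satisfies the operator equation Ψˣ = F(Ψ) + I. -/
/-- A causal operator on sequence space: the t-th output depends only on inputs 0..t. -/
def Causal {E F : Type*} (Q : (ℕ → E) → (ℕ → F)) : Prop :=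
  ∀ x y : ℕ → E, ∀ t, (∀ s, s ≤ t → x s = y s) → Q x t = Q y t

/-- A strictly causal operator of two sequence arguments. -/
def StrictlyCausal2 {E U F : Type*} (Φ : (ℕ → E) → (ℕ → U) → (ℕ → F)) : Prop :=
  ∀ x y u v, ∀ t, (∀ s, s < t → x s = y s) → (∀ s, s < t → u s = v s) →
    Φ x u t = Φ y v t

/-- Sequence defined by strong recursion: value at `t` is a function of the values at `r < t`. -/
noncomputable def seqRec {α : Type*} (g : ℕ → (ℕ → α) → α) (z : α) : ℕ → α
  | t => g t (fun r => if h : r < t then seqRec g z r else z)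
decreasing_by exact h

lemma seqRec_eq {α : Type*} (g : ℕ → (ℕ → α) → α) (z : α) (t : ℕ) :
    seqRec g z t = g t (fun r => if h : r < t then seqRec g z r else z) := by
  rw [seqRec]

/-- A causal pair `Ψ = (Ψˣ, Ψᵘ)` is an achievable closed-loop map of the
strictly causal plant `F` (i.e. there is a causal controller `K` realizing it) if and only
if it satisfies the operator equation `Ψˣ = F(Ψ) + I`. -/
theorem achievable_iff_CLM_equation {n m : ℕ}
    (F : (ℕ → Fin n → ℝ) → (ℕ → Fin m → ℝ) → (ℕ → Fin n → ℝ))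
    (Ψx : (ℕ → Fin n → ℝ) → (ℕ → Fin n → ℝ))
    (Ψu : (ℕ → Fin n → ℝ) → (ℕ → Fin m → ℝ))
    (hF : StrictlyCausal2 F) (hΨx : Causal Ψx) (hΨu : Causal Ψu) :
    (∃ K : (ℕ → Fin n → ℝ) → (ℕ → Fin m → ℝ), Causal K ∧
        ∀ w, Ψx w = F (Ψx w) (Ψu w) + w ∧ Ψu w = K (Ψx w))
    ↔ (∀ w, Ψx w = F (Ψx w) (Ψu w) + w) := by
  constructor
  · rintro ⟨K, _, h⟩ w
    exact (h w).1
  · intro hfix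
    -- construct the controller by strong recursion
    set K : (ℕ → Fin n → ℝ) → (ℕ → Fin m → ℝ) :=
      fun x => seqRec (fun t u => Ψu (fun s => x s - F x u s) t) 0 with hKdef
    -- fixed-point property of K
    have hKfix : ∀ x t, K x t = Ψu (fun s => x s - F x (K x) s) t := by
      intro x t
      show seqRec (fun t u => Ψu (fun s => x s - F x u s) t) 0 t = _
      rw [seqRec_eq]
      apply hΨu
      intro s hs
      have hFeq : F x (fun r => if h : r < t then
          seqRec (fun t u => Ψu (fun s => x s - F x u s) t) 0 r else 0) s
          = F x (K x) s := by
        apply hF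
        · intro r _; rfl
        · intro r hr
          simp [hKdef, dif_pos (lt_of_lt_of_le hr hs)]
      rw [hFeq]
    -- K is causal
    have hKcausal : Causal K := by
      intro x y t
      induction t using Nat.strong_induction_on with
      | _ t ih =>
        intro hxy
        rw [hKfix, hKfix]
        apply hΨu
        intro s hs
        have h1 : x s = y s := hxy s hs
        have h2 : F x (K x) s = F y (K y) s := by
          apply hF
          · intro r hr; exact hxy r (le_of_lt (lt_of_lt_of_le hr hs))
          · intro r hr
            exact ih r (lt_of_lt_of_le hr hs)
              (fun q hq => hxy q (le_trans hq (le_of_lt (lt_of_lt_of_le hr hs))))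
        rw [h1, h2]
    -- K realizes Ψu on closed-loop trajectories
    have hKΨ : ∀ w t, K (Ψx w) t = Ψu w t := by
      intro w t
      induction t using Nat.strong_induction_on with
      | _ t ih =>
        rw [hKfix]
        apply hΨu
        intro s hs
        have hw : w s = Ψx w s - F (Ψx w) (Ψu w) s := by
          have := congrFun (hfix w) s
          rw [this]
          simp
        rw [hw]
        have : F (Ψx w) (K (Ψx w)) s = F (Ψx w) (Ψu w) s := by
          apply hF
          · intro r _; rfl
          · intro r hr; exact ih r (lt_of_lt_of_le hr hs)
        rw [this]
    exact ⟨K, hKcausal, fun w => ⟨hfix w, funext fun t => (hKΨ w t).symm⟩⟩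
end

section
/- Let F be strictly causal and Ψ = (Ψˣ, Ψᵘ) satisfy Ψˣ = F(Ψ) + I. Then Ψˣ - I is strictly causal, Ψˣ is causally invertible, and the controller K = Ψᵘ ∘ (Ψˣ)⁻¹ realizes Ψ as the closed-loop map: for any w, the unique closed-loop trajectories of x = F(x,u) + w, u = K(x) are x = Ψˣ(w), u = Ψᵘ(w). -/
/-- A strictly causal operator: the t-th output depends only on inputs 0..t-1. -/
def StrictlyCausal {E F : Type*} (Q : (ℕ → E) → (ℕ → F)) : Prop :=
  ∀ x y : ℕ → E, ∀ t, (∀ s, s < t → x s = y s) → Q x t = Q y t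

/-- Inverse of `id + G` for strictly causal `G`, built by recursion on time. -/
noncomputable def invSeq {n : ℕ} (G : (ℕ → Fin n → ℝ) → (ℕ → Fin n → ℝ))
    (a : ℕ → Fin n → ℝ) : ℕ → Fin n → ℝ
  | t => a t - G (fun s => if _ : s < t then invSeq G a s else 0) t
termination_by t => t

theorem invSeq_spec {n : ℕ} {G : (ℕ → Fin n → ℝ) → (ℕ → Fin n → ℝ)}
    (hG : StrictlyCausal G) (a : ℕ → Fin n → ℝ) (t : ℕ) :
    invSeq G a t = a t - G (invSeq G a) t := by
  rw [invSeq]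
  congr 1
  exact hG _ _ t (fun s hs => by simp [hs])

theorem invSeq_causal {n : ℕ} {G : (ℕ → Fin n → ℝ) → (ℕ → Fin n → ℝ)}
    (hG : StrictlyCausal G) : Causal (invSeq G) := by
  intro a b t hab
  induction t using Nat.strong_induction_on with
  | _ t ih =>
    rw [invSeq_spec hG, invSeq_spec hG, hab t le_rfl,
      hG (invSeq G a) (invSeq G b) t
        (fun s hs => ih s hs (fun s' hs' => hab s' (hs'.trans hs.le)))]

theorem invSeq_left_inv {n : ℕ} {G : (ℕ → Fin n → ℝ) → (ℕ → Fin n → ℝ)}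
    (hG : StrictlyCausal G) (w : ℕ → Fin n → ℝ) :
    invSeq G (fun t => w t + G w t) = w := by
  funext t
  induction t using Nat.strong_induction_on with
  | _ t ih =>
    rw [invSeq_spec hG, hG (invSeq G fun t => w t + G w t) w t ih]
    abel

/-- If `Ψ = (Ψˣ,Ψᵘ)` satisfies the CLM equation `Ψˣ = F(Ψ) + I` for a strictly
causal `F`, then `Ψˣ - I` is strictly causal, `Ψˣ` is causally invertible, and the controller
`K = Ψᵘ ∘ (Ψˣ)⁻¹` realizes `Ψ` as the closed-loop map: for any `w` the unique closed-loop
trajectories of `x = F(x,u) + w`, `u = K(x)` are `x = Ψˣ(w)`, `u = Ψᵘ(w)`. -/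
theorem CLM_realized_by_SL_controller {n m : ℕ}
    (F : (ℕ → Fin n → ℝ) → (ℕ → Fin m → ℝ) → (ℕ → Fin n → ℝ))
    (Ψx : (ℕ → Fin n → ℝ) → (ℕ → Fin n → ℝ))
    (Ψu : (ℕ → Fin n → ℝ) → (ℕ → Fin m → ℝ))
    (hF : StrictlyCausal2 F) (hΨx : Causal Ψx) (hΨu : Causal Ψu)
    (hCLM : ∀ w, Ψx w = F (Ψx w) (Ψu w) + w) :
    StrictlyCausal (fun w => Ψx w - w) ∧
    ∃ Ψinv : (ℕ → Fin n → ℝ) → (ℕ → Fin n → ℝ),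
      Causal Ψinv ∧ (∀ a, Ψx (Ψinv a) = a) ∧ (∀ w, Ψinv (Ψx w) = w) ∧
      (∀ w, Ψx w = F (Ψx w) (Ψu w) + w ∧ Ψu w = Ψu (Ψinv (Ψx w))) ∧
      (∀ w x u, x = F x u + w → u = Ψu (Ψinv x) → x = Ψx w ∧ u = Ψu w) := by
  set G : (ℕ → Fin n → ℝ) → (ℕ → Fin n → ℝ) := fun w => Ψx w - w with hGdef
  have hΨG : ∀ w t, Ψx w t = w t + G w t := by
    intro w t; simp [hGdef]
  have hGF : ∀ w, G w = F (Ψx w) (Ψu w) := by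
    intro w; funext t
    have := congrFun (hCLM w) t
    simp only [hGdef, Pi.sub_apply, Pi.add_apply] at this ⊢
    rw [this]; abel
  have hGsc : StrictlyCausal G := by
    intro w w' t hww
    rw [hGF, hGF]
    exact hF _ _ _ _ t
      (fun s hs => hΨx w w' s (fun s' hs' => hww s' (lt_of_le_of_lt hs' hs)))
      (fun s hs => hΨu w w' s (fun s' hs' => hww s' (lt_of_le_of_lt hs' hs)))
  have hleft : ∀ w, invSeq G (Ψx w) = w := by
    intro w
    have : Ψx w = fun t => w t + G w t := funext (hΨG w)
    rw [this, invSeq_left_inv hGsc]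
  have hright : ∀ a, Ψx (invSeq G a) = a := by
    intro a; funext t
    rw [hΨG]
    have := invSeq_spec hGsc a t
    rw [this]; abel
  refine ⟨hGsc, invSeq G, invSeq_causal hGsc, hright, hleft, fun w => ⟨hCLM w, by rw [hleft]⟩, ?_⟩
  intro w x u hx hu
  have hxw : ∀ t, x t = Ψx w t := by
    intro t
    induction t using Nat.strong_induction_on with
    | _ t ih =>
      have huw : ∀ s, s < t → u s = Ψu w s := by
        intro s hs
        rw [hu]
        have : invSeq G x s = invSeq G (Ψx w) s :=
          invSeq_causal hGsc x (Ψx w) s (fun s' hs' => ih s' (lt_of_le_of_lt hs' hs))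
        calc Ψu (invSeq G x) s = Ψu (invSeq G (Ψx w)) s := by
              refine hΨu _ _ s (fun s' hs' => ?_)
              exact invSeq_causal hGsc x (Ψx w) s'
                (fun s'' hs'' => ih s'' (lt_of_le_of_lt (hs''.trans hs') hs))
          _ = Ψu w s := by rw [hleft]
      have hFx : F x u t = F (Ψx w) (Ψu w) t :=
        hF _ _ _ _ t (fun s hs => ih s hs) huw
      have h1 := congrFun hx t
      have h2 := congrFun (hCLM w) t
      simp only [Pi.add_apply] at h1 h2
      rw [h1, hFx, h2]
  have hxw' : x = Ψx w := funext hxw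
  refine ⟨hxw', ?_⟩
  rw [hu, hxw', hleft]
end

section
/- Let F be strictly causal and suppose K' and K'' are two causal controllers realizing the same closed-loop map Ψ = (Ψˣ, Ψᵘ), i.e. Φ[F,K'] = Φ[F,K''] = Ψ. Then K' = K''. In other words, the map from achievable closed-loop maps to realizing controllers is injective, with the unique realizing controller given by K = Ψᵘ ∘ (Ψˣ)⁻¹. -/
/-- If two causal controllers `K'` and `K''` realize the same closed-loop map
`Ψ = (Ψˣ,Ψᵘ)` for a strictly causal plant `F`, then `K' = K''`; moreover the unique realizing
controller satisfies `K'(Ψˣ(w)) = Ψᵘ(w)` for all `w`, i.e. `K' = Ψᵘ ∘ (Ψˣ)⁻¹`. -/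
theorem realizing_controller_unique {n m : ℕ}
    (F : (ℕ → Fin n → ℝ) → (ℕ → Fin m → ℝ) → (ℕ → Fin n → ℝ))
    (K' K'' : (ℕ → Fin n → ℝ) → (ℕ → Fin m → ℝ))
    (Ψx : (ℕ → Fin n → ℝ) → (ℕ → Fin n → ℝ))
    (Ψu : (ℕ → Fin n → ℝ) → (ℕ → Fin m → ℝ))
    (hF : StrictlyCausal2 F) (hK' : Causal K') (hK'' : Causal K'')
    (hΨx : Causal Ψx) (hΨu : Causal Ψu)
    (h1 : ∀ w, Ψx w = F (Ψx w) (Ψu w) + w ∧ Ψu w = K' (Ψx w))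
    (h2 : ∀ w, Ψx w = F (Ψx w) (Ψu w) + w ∧ Ψu w = K'' (Ψx w)) :
    K' = K'' ∧ ∀ w, K' (Ψx w) = Ψu w := by
  have key : ∀ x : ℕ → Fin n → ℝ, Ψx (x - F x (K' x)) = x := by
    intro x
    set u := K' x with hu
    set w := x - F x u with hw
    have main : ∀ t, Ψx w t = x t := by
      intro t
      induction t using Nat.strong_induction_on with
      | _ t ih =>
        have hx1 := (h1 w).1
        have hxu := (h1 w).2
        have hucong : ∀ s, s < t → Ψu w s = u s := by
          intro s hs
          rw [hxu, hu]
          exact hK' (Ψx w) x s (fun r hr => ih r (lt_of_le_of_lt hr hs))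
        have hFeq : F (Ψx w) (Ψu w) t = F x u t :=
          hF _ _ _ _ t (fun s hs => ih s hs) hucong
        have h3 : Ψx w t = F (Ψx w) (Ψu w) t + w t := by
          conv_lhs => rw [hx1]
          rfl
        rw [h3, hFeq, hw]
        simp
    funext t
    exact main t
  refine ⟨?_, fun w => ((h1 w).2).symm⟩
  funext x
  have h1' := (h1 (x - F x (K' x))).2
  have h2' := (h2 (x - F x (K' x))).2
  rw [key x] at h1' h2'
  exact h1'.symm.trans h2'
end

section
/- (Small gain theorem, global version) Consider the equation y = Δ(y) + w in sequence space, where Δ is strictly causal and satisfies ‖Δ(x)‖_p ≤ γ‖x‖_p + β for all x ∈ ℓⁿ_p, with 0 ≤ γ < 1 and β ≥ 0. Then for every w ∈ ℓⁿ_p the unique solution y = (I - Δ)⁻¹(w) satisfies ‖y‖_p ≤ (‖w‖_p + β)/(1 - γ). -/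
/-!
`pNorm` is the `L^p` seminorm for counting measure on `ℕ`, so Minkowski's inequality and Fatou's
lemma apply. Strict causality makes the `n`-th Picard iterate of `y ↦ Δ y + w` independent of
the seed below time `n`, which yields the unique solution. For the bound, causality shows that
the truncation `y_T` of a solution to `[0, T)` solves the truncated equation, so
`‖y_T‖ ≤ γ ‖y_T‖ + β + ‖w‖`; since `‖y_T‖ < ∞` this gives `‖y_T‖ ≤ (‖w‖ + β) / (1 - γ)`
uniformly in `T`, and letting `T → ∞` the same bound for `y`.
-/

open scoped ENNReal NNReal

noncomputable def pNorm (p : ℝ≥0∞) {E : Type*} [NormedAddCommGroup E] (x : ℕ → E) : ℝ≥0∞ :=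
  if p = ∞ then ⨆ k, (‖x k‖₊ : ℝ≥0∞)
  else (∑' k, (‖x k‖₊ : ℝ≥0∞) ^ p.toReal) ^ (1 / p.toReal)

open MeasureTheory Filter Set Topology

theorem pNorm_eq_eLpNorm_count {E : Type*} [NormedAddCommGroup E] {p : ℝ≥0∞} (hp : p ≠ 0)
    (x : ℕ → E) : pNorm p x = eLpNorm x p .count := by
  unfold pNorm
  split_ifs with hp_top
  · simp [hp_top, enorm]
  · rw [eLpNorm_eq_lintegral_rpow_enorm_toReal hp hp_top, lintegral_count]
    rfl

theorem ENNReal.le_div_of_le_mul_add {a c : ℝ≥0∞} {γ : ℝ≥0} (hγ : γ < 1) (ha : a ≠ ∞)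
    (h : a ≤ γ * a + c) : a ≤ c / (1 - γ) := by
  have hγ' : (γ : ℝ≥0∞) < 1 := by exact_mod_cast hγ
  rw [ENNReal.le_div_iff_mul_le (Or.inl (tsub_pos_of_lt hγ').ne')
      (Or.inl (ENNReal.sub_ne_top ENNReal.one_ne_top)), ENNReal.mul_sub (fun _ _ => ha), mul_one,
    mul_comm]
  exact tsub_le_iff_left.2 h

theorem eLpNorm_count_indicator_Iio_lt_top {E : Type*} [NormedAddCommGroup E] {p : ℝ≥0∞}
    (y : ℕ → E) (T : ℕ) : eLpNorm ((Iio T).indicator y) p .count < ∞ := by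
  rw [eLpNorm_indicator_eq_eLpNorm_restrict measurableSet_Iio]
  have : IsFiniteMeasure (Measure.count.restrict (Iio T)) :=
    isFiniteMeasure_restrict.2 (by simp [Measure.count_apply_finite _ (finite_Iio T)])
  refine (MemLp.of_bound .of_discrete (∑ k ∈ Finset.range T, ‖y k‖) ?_).eLpNorm_lt_top
  refine ae_restrict_of_forall_mem measurableSet_Iio fun k hk => ?_
  exact Finset.single_le_sum (f := fun k => ‖y k‖) (fun _ _ => norm_nonneg _) (by simpa using hk)

theorem eLpNorm_count_le_of_indicator_Iio_le {E : Type*} [NormedAddCommGroup E] {p : ℝ≥0∞}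
    {y : ℕ → E} {C : ℝ≥0∞} (hC : ∀ T, eLpNorm ((Iio T).indicator y) p .count ≤ C) :
    eLpNorm y p .count ≤ C := by
  have hlim : ∀ k, Tendsto (fun T => (Iio T).indicator y k) atTop (𝓝 (y k)) := fun k =>
    tendsto_const_nhds.congr' <| (eventually_gt_atTop k).mono fun T hT =>
      (indicator_of_mem (mem_Iio.2 hT) y).symm
  exact (Lp.eLpNorm_lim_le_liminf_eLpNorm (fun _ => .of_discrete) y (ae_of_all _ hlim)).trans
    (liminf_le_of_frequently_le' (Frequently.of_forall hC))

namespace StrictlyCausal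

variable {α : Type*} {F : (ℕ → α) → (ℕ → α)}

theorem iterate_apply_eq (hF : StrictlyCausal F) (x x' : ℕ → α) :
    ∀ {n s : ℕ}, s < n → F^[n] x s = F^[n] x' s
  | n + 1, s, hs => by
    rw [Function.iterate_succ_apply', Function.iterate_succ_apply']
    exact hF _ _ s fun r hr => iterate_apply_eq hF x x' (hr.trans_le (Nat.lt_succ_iff.1 hs))

theorem apply_eq_iterate_of_isFixedPt (hF : StrictlyCausal F) {y : ℕ → α}
    (hy : Function.IsFixedPt F y) (x : ℕ → α) (s : ℕ) : y s = F^[s + 1] x s := by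
  conv_lhs => rw [← (hy.iterate (s + 1)).eq]
  exact hF.iterate_apply_eq y x s.lt_succ_self

theorem existsUnique_isFixedPt [Nonempty α] (hF : StrictlyCausal F) :
    ∃! y, Function.IsFixedPt F y := by
  obtain ⟨x⟩ : Nonempty (ℕ → α) := inferInstance
  refine ⟨fun s => F^[s + 1] x s, funext fun t => ?_,
    fun y hy => funext (hF.apply_eq_iterate_of_isFixedPt hy x)⟩
  have hagree : ∀ s < t, F^[s + 1] x s = F^[t] x s := fun s hs => by
    rw [← Nat.add_sub_cancel' hs, Function.iterate_add_apply F (s + 1)]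
    exact hF.iterate_apply_eq _ _ s.lt_succ_self
  rw [hF _ _ t hagree, ← Function.iterate_succ_apply' F t x]

theorem add_const {E G : Type*} [Add G] {Q : (ℕ → E) → (ℕ → G)} (hQ : StrictlyCausal Q)
    (w : ℕ → G) : StrictlyCausal fun x => Q x + w :=
  fun x y t hxy => congrArg (· + w t) (hQ x y t hxy)

end StrictlyCausal

theorem eLpNorm_count_le_of_smallGain {E : Type*} [NormedAddCommGroup E] {p : ℝ≥0∞} (hp : 1 ≤ p)
    {Δ : (ℕ → E) → (ℕ → E)} (hΔc : StrictlyCausal Δ) {γ β : ℝ≥0} (hγ : γ < 1)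
    (hΔ : ∀ x : ℕ → E, eLpNorm x p .count < ∞ →
      eLpNorm (Δ x) p .count ≤ γ * eLpNorm x p .count + β)
    {w y : ℕ → E} (hy : ∀ t, y t = Δ y t + w t) :
    eLpNorm y p .count ≤ (eLpNorm w p .count + β) / (1 - γ) := by
  refine eLpNorm_count_le_of_indicator_Iio_le fun T => ?_
  set yT := (Iio T).indicator y
  have hyT_fin : eLpNorm yT p .count < ∞ := eLpNorm_count_indicator_Iio_lt_top y T
  -- causality: `Δ yT` and `Δ y` agree below `T`
  have hyT : yT = (Iio T).indicator (Δ yT + w) := by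
    ext k
    by_cases hk : k < T
    · simp only [yT, indicator_of_mem (mem_Iio.2 hk), Pi.add_apply, hy k]
      rw [hΔc yT y k fun s hs => indicator_of_mem (mem_Iio.2 (hs.trans hk)) y]
    · simp [yT, indicator_of_notMem (notMem_Iio.2 (not_lt.1 hk))]
  refine ENNReal.le_div_of_le_mul_add hγ hyT_fin.ne ?_
  calc eLpNorm yT p .count
      ≤ eLpNorm (Δ yT + w) p .count := by
        conv_lhs => rw [hyT]
        exact eLpNorm_indicator_le _
    _ ≤ eLpNorm (Δ yT) p .count + eLpNorm w p .count :=
        eLpNorm_add_le .of_discrete .of_discrete hp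
    _ ≤ γ * eLpNorm yT p .count + β + eLpNorm w p .count := by
        gcongr; exact hΔ yT hyT_fin
    _ = γ * eLpNorm yT p .count + (eLpNorm w p .count + β) := by ring

theorem global_small_gain_general {E : Type*} [NormedAddCommGroup E]
    (p : ℝ≥0∞) (hp : 1 ≤ p)
    (Δ : (ℕ → E) → (ℕ → E)) (hΔc : StrictlyCausal Δ)
    (γ β : ℝ≥0) (hγ : γ < 1)
    (hΔ : ∀ x : ℕ → E, pNorm p x < ∞ → pNorm p (Δ x) ≤ γ * pNorm p x + β)
    (w : ℕ → E) :
    (∃! y : ℕ → E, ∀ t, y t = Δ y t + w t) ∧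
    ∀ y : ℕ → E, (∀ t, y t = Δ y t + w t) →
      pNorm p y ≤ (pNorm p w + β) / (1 - (γ : ℝ≥0∞)) := by
  have hp0 : p ≠ 0 := (zero_lt_one.trans_le hp).ne'
  simp only [pNorm_eq_eLpNorm_count hp0] at hΔ ⊢
  refine ⟨?_, fun y hy => eLpNorm_count_le_of_smallGain hp hΔc hγ hΔ hy⟩
  simpa [Function.IsFixedPt, funext_iff, eq_comm] using (hΔc.add_const w).existsUnique_isFixedPt

/-- global small gain theorem: if `Δ` is strictly causal with
`‖Δ(x)‖_p ≤ γ‖x‖_p + β` for all `x ∈ ℓ_p`, `γ < 1`, then for every `w ∈ ℓ_p` the equation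
`y = Δ(y) + w` has a unique solution, and every solution satisfies
`‖y‖_p ≤ (‖w‖_p + β)/(1-γ)`. -/
theorem global_small_gain {E : Type*} [NormedAddCommGroup E]
    (p : ℝ≥0∞) (hp : 1 ≤ p)
    (Δ : (ℕ → E) → (ℕ → E)) (hΔc : StrictlyCausal Δ)
    (γ β : ℝ≥0) (hγ : γ < 1)
    (hΔ : ∀ x : ℕ → E, pNorm p x < ∞ → pNorm p (Δ x) ≤ γ * pNorm p x + β)
    (w : ℕ → E) (hw : pNorm p w < ∞) :
    (∃! y : ℕ → E, ∀ t, y t = Δ y t + w t) ∧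
    ∀ y : ℕ → E, (∀ t, y t = Δ y t + w t) →
      pNorm p y ≤ (pNorm p w + β) / (1 - (γ : ℝ≥0∞)) :=
  global_small_gain_general p hp Δ hΔc γ β hγ hΔ w
end

section
/- (Small gain theorem, local version) Let Δ be strictly causal and suppose there exist ρ > 0, 0 ≤ γ < 1, β ≥ 0 such that ‖Δ(x)‖_p ≤ γ‖x‖_p + β whenever ‖x‖_p < ρ. Then for any w with ‖w‖_p < (1-γ)ρ - β, the solution y of y = Δ(y) + w satisfies ‖y‖_p ≤ (‖w‖_p + β)/(1-γ) < ρ. -/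
open scoped ENNReal NNReal

/-! `pNorm p` is `eLpNorm · p Measure.count`, and the argument works for any measure on `ℕ`.
Write `P^τ y = (Iio τ).indicator y` for the truncation of `y` to the times `t < τ`. By strict
causality `P^(τ+1) y = P^(τ+1) (Δ (P^τ y) + w)`, so if `x ↦ Δ x + w` maps the ball of radius `M`
into itself in norm, induction on `τ` keeps every `‖P^τ y‖_p` below `M`, and Fatou's lemma
passes this bound to `‖y‖_p`. The small gain hypothesis makes `M = (‖w‖_p + β) / (1 - γ)` such a
radius as soon as `M < ρ`. -/

open MeasureTheory Filter Set Topology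

theorem ENNReal.mul_div_one_sub_add {γ : ℝ≥0∞} (hγ : γ < 1) (a : ℝ≥0∞) :
    γ * (a / (1 - γ)) + a = a / (1 - γ) := by
  have h₀ : 1 - γ ≠ 0 := (tsub_pos_of_lt hγ).ne'
  have h_top : 1 - γ ≠ ∞ := ne_top_of_le_ne_top ENNReal.one_ne_top tsub_le_self
  calc γ * (a / (1 - γ)) + a = γ * (a / (1 - γ)) + (1 - γ) * (a / (1 - γ)) := by
        rw [ENNReal.mul_div_cancel h₀ h_top]
    _ = a / (1 - γ) := by rw [← add_mul, add_tsub_cancel_of_le hγ.le, one_mul]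

theorem StrictlyCausal.apply_indicator_Iio {E F : Type*} [Zero E] {Δ : (ℕ → E) → (ℕ → F)}
    (hΔ : StrictlyCausal Δ) (x : ℕ → E) {τ t : ℕ} (ht : t ≤ τ) :
    Δ ((Iio τ).indicator x) t = Δ x t :=
  hΔ _ _ t fun _ hs => indicator_of_mem (mem_Iio.2 (hs.trans_le ht)) x

section Truncation

variable {E : Type*} [NormedAddCommGroup E] {p : ℝ≥0∞} {μ : Measure ℕ}

theorem eLpNorm_le_of_forall_indicator_Iio_le {x : ℕ → E} {M : ℝ≥0∞}
    (h : ∀ τ, eLpNorm ((Iio τ).indicator x) p μ ≤ M) : eLpNorm x p μ ≤ M := by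
  have h_lim : ∀ k, Tendsto (fun τ => (Iio τ).indicator x k) atTop (𝓝 (x k)) := fun k =>
    tendsto_atTop_of_eventually_const (i₀ := k + 1) fun τ hτ =>
      indicator_of_mem (mem_Iio.2 (by omega)) x
  exact (Lp.eLpNorm_lim_le_liminf_eLpNorm (fun _ => .of_discrete) x (.of_forall h_lim)).trans
    (liminf_le_of_frequently_le' (.of_forall h))

theorem StrictlyCausal.eLpNorm_indicator_Iio_succ_le {Δ : (ℕ → E) → (ℕ → E)} (hp : 1 ≤ p)
    (hΔ : StrictlyCausal Δ) {y w : ℕ → E} (hy : ∀ t, y t = Δ y t + w t) (τ : ℕ) :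
    eLpNorm ((Iio (τ + 1)).indicator y) p μ ≤
      eLpNorm (Δ ((Iio τ).indicator y)) p μ + eLpNorm w p μ := by
  have h_eq :
      (Iio (τ + 1)).indicator y = (Iio (τ + 1)).indicator (Δ ((Iio τ).indicator y) + w) := by
    refine indicator_congr fun t ht => ?_
    rw [hy t, Pi.add_apply, hΔ.apply_indicator_Iio y (Nat.lt_succ_iff.1 ht)]
  rw [h_eq]
  exact (eLpNorm_indicator_le _).trans (eLpNorm_add_le .of_discrete .of_discrete hp)

theorem StrictlyCausal.eLpNorm_le_of_eq_add {Δ : (ℕ → E) → (ℕ → E)} (hp : 1 ≤ p)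
    (hΔ : StrictlyCausal Δ) {w : ℕ → E} {M : ℝ≥0∞}
    (hM : ∀ x, eLpNorm x p μ ≤ M → eLpNorm (Δ x) p μ + eLpNorm w p μ ≤ M)
    {y : ℕ → E} (hy : ∀ t, y t = Δ y t + w t) : eLpNorm y p μ ≤ M := by
  refine eLpNorm_le_of_forall_indicator_Iio_le fun τ => ?_
  induction τ with
  | zero => simp
  | succ τ ih => exact (hΔ.eLpNorm_indicator_Iio_succ_le hp hy τ).trans (hM _ ih)

end Truncation

theorem local_small_gain_general {E : Type*} [NormedAddCommGroup E]
    (p : ℝ≥0∞) (hp : 1 ≤ p)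
    (Δ : (ℕ → E) → (ℕ → E)) (hΔc : StrictlyCausal Δ)
    (ρ : ℝ≥0∞)
    (γ β : ℝ≥0) (hγ : γ < 1)
    (hΔ : ∀ x : ℕ → E, pNorm p x < ρ → pNorm p (Δ x) ≤ γ * pNorm p x + β)
    (w : ℕ → E) (hw : pNorm p w < (1 - (γ : ℝ≥0∞)) * ρ - β) :
    ∀ y : ℕ → E, (∀ t, y t = Δ y t + w t) →
      pNorm p y ≤ (pNorm p w + β) / (1 - (γ : ℝ≥0∞)) ∧ pNorm p y < ρ := by
  intro y hy
  simp only [pNorm_eq_eLpNorm_count (one_pos.trans_le hp).ne'] at hΔ hw ⊢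
  have hγ' : (γ : ℝ≥0∞) < 1 := ENNReal.coe_lt_one_iff.2 hγ
  set M := (eLpNorm w p .count + β) / (1 - (γ : ℝ≥0∞))
  have hMρ : M < ρ := by
    rw [ENNReal.div_lt_iff (.inl (tsub_pos_of_lt hγ').ne') (.inl (by simp)), mul_comm]
    exact (ENNReal.cancel_of_ne ENNReal.coe_ne_top).lt_tsub_iff_right.1 hw
  have h_ball : ∀ x, eLpNorm x p .count ≤ M → eLpNorm (Δ x) p .count + eLpNorm w p .count ≤ M :=
    fun x hx => calc
      eLpNorm (Δ x) p .count + eLpNorm w p .count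
          ≤ γ * eLpNorm x p .count + β + eLpNorm w p .count := by
        gcongr; exact hΔ x (hx.trans_lt hMρ)
      _ ≤ γ * M + (eLpNorm w p .count + β) := by grw [hx]; rw [add_assoc, add_comm (β : ℝ≥0∞)]
      _ = M := ENNReal.mul_div_one_sub_add hγ' _
  have hy_le := hΔc.eLpNorm_le_of_eq_add hp h_ball hy
  exact ⟨hy_le, hy_le.trans_lt hMρ⟩

/-- local small gain theorem: if `Δ` is strictly causal and satisfies
`‖Δ(x)‖_p ≤ γ‖x‖_p + β` for all `‖x‖_p < ρ` with `γ < 1`, then for any `w` with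
`‖w‖_p < (1-γ)ρ - β`, every solution of `y = Δ(y) + w` satisfies
`‖y‖_p ≤ (‖w‖_p + β)/(1-γ) < ρ`. -/
theorem local_small_gain {E : Type*} [NormedAddCommGroup E]
    (p : ℝ≥0∞) (hp : 1 ≤ p)
    (Δ : (ℕ → E) → (ℕ → E)) (hΔc : StrictlyCausal Δ)
    (ρ : ℝ≥0∞) (hρ : 0 < ρ)
    (γ β : ℝ≥0) (hγ : γ < 1)
    (hΔ : ∀ x : ℕ → E, pNorm p x < ρ → pNorm p (Δ x) ≤ γ * pNorm p x + β)
    (w : ℕ → E) (hw : pNorm p w < (1 - (γ : ℝ≥0∞)) * ρ - β) :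
    ∀ y : ℕ → E, (∀ t, y t = Δ y t + w t) →
      pNorm p y ≤ (pNorm p w + β) / (1 - (γ : ℝ≥0∞)) ∧ pNorm p y < ρ :=
  local_small_gain_general p hp Δ hΔc ρ γ β hγ hΔ w hw
end

section
/- (Robust stability) Let F be strictly causal and incrementally finite-gain ℓ_p-stable, and let Ψ = (Ψˣ, Ψᵘ) be causal with Ψˣ - I strictly causal and Ψ incrementally finite-gain ℓ_p-stable. If the residual operator Δ[F,Ψ] := F(Ψ) + I - Ψˣ is (γ,β)-incrementally finite-gain ℓ_p-stable with γ < 1, then the perturbed closed-loop map Φ_{S'}[F,Ψ] : (w,d,v) ↦ (x,u,ŵ) defined by x = F(x,u) + w, ŵ = x + v - (Ψˣ - I)(ŵ), u = Ψᵘ(ŵ) + d is finite-gain ℓ_p-stable at any nominal perturbation δ* ∈ ℓ_p. -/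
open scoped ENNReal NNReal

/-!
Eliminating `x = Ψˣ ŵ - v` and `u = Ψᵘ ŵ + d`, the internal signal `ŵ` is a fixed point of the
strictly causal map `ŵ ↦ Δ[F,Ψ](ŵ) + (F(Ψˣ ŵ - v, Ψᵘ ŵ + d) - F(Ψˣ ŵ, Ψᵘ ŵ)) + w + v`. Its first
term has incremental gain `γ < 1`, and its second is bounded through the gain of `F` by
`‖v‖ + ‖d‖`, not by `‖v - v*‖ + ‖d - d*‖`; this is why stability only holds at a nominal `δ*`.
Bounding the time truncations of `ŵ` one step at a time (strict causality) shows `ŵ ∈ ℓ_p`; the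
contraction applied to two trajectories then bounds `‖ŵ - ŵ*‖` by `(1 - γ)⁻¹` times the size of
the perturbation plus a bias depending on `δ*`, and `x`, `u` follow through `Ψ`.
-/

open MeasureTheory Filter Set

section pNorm

variable {E E' : Type*} [NormedAddCommGroup E] [NormedAddCommGroup E'] {p : ℝ≥0∞}

theorem pNorm_eq_eLpNorm (hp : p ≠ 0) (x : ℕ → E) : pNorm p x = eLpNorm x p Measure.count := by
  unfold pNorm
  split_ifs with hp_top
  · simp [hp_top, eLpNorm_exponent_top, eLpNormEssSup, enorm_eq_nnnorm]
  · simp [eLpNorm_eq_lintegral_rpow_enorm_toReal hp hp_top, lintegral_count, enorm_eq_nnnorm]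

theorem pNorm_zero (hp : 1 ≤ p) : pNorm p (0 : ℕ → E) = 0 := by
  rw [pNorm_eq_eLpNorm (by positivity), eLpNorm_zero]

theorem pNorm_neg (hp : 1 ≤ p) (x : ℕ → E) : pNorm p (-x) = pNorm p x := by
  rw [pNorm_eq_eLpNorm (by positivity), pNorm_eq_eLpNorm (by positivity), eLpNorm_neg]

theorem pNorm_add_le (hp : 1 ≤ p) (x y : ℕ → E) : pNorm p (x + y) ≤ pNorm p x + pNorm p y := by
  simp only [pNorm_eq_eLpNorm (one_pos.trans_le hp).ne']
  exact eLpNorm_add_le StronglyMeasurable.of_discrete.aestronglyMeasurable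
    StronglyMeasurable.of_discrete.aestronglyMeasurable hp

theorem pNorm_sub_le (hp : 1 ≤ p) (x y : ℕ → E) : pNorm p (x - y) ≤ pNorm p x + pNorm p y := by
  simpa [sub_eq_add_neg, pNorm_neg hp] using pNorm_add_le hp x (-y)

theorem pNorm_le_sub_add (hp : 1 ≤ p) (x y : ℕ → E) : pNorm p x ≤ pNorm p (x - y) + pNorm p y := by
  simpa using pNorm_add_le hp (x - y) y

theorem pNorm_mono (hp : 1 ≤ p) {x : ℕ → E} {y : ℕ → E'} (h : ∀ t, ‖x t‖₊ ≤ ‖y t‖₊) :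
    pNorm p x ≤ pNorm p y := by
  simp only [pNorm_eq_eLpNorm (one_pos.trans_le hp).ne']
  exact eLpNorm_mono_nnnorm h

theorem pNorm_le_of_forall_indicator_Iio_le (hp : 1 ≤ p) {x : ℕ → E} {M : ℝ≥0∞}
    (h : ∀ T, pNorm p ((Iio T).indicator x) ≤ M) : pNorm p x ≤ M := by
  simp only [pNorm_eq_eLpNorm (one_pos.trans_le hp).ne'] at h ⊢
  refine Lp.eLpNorm_le_of_ae_tendsto (u := atTop) (Eventually.of_forall h)
    (fun _ => StronglyMeasurable.of_discrete.aestronglyMeasurable) (ae_of_all _ fun t => ?_)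
  exact tendsto_atTop_of_eventually_const (i₀ := t + 1) fun T hT =>
    indicator_of_mem (mem_Iio.2 (Nat.lt_of_succ_le hT)) x

end pNorm

section Contraction

theorem le_inv_one_sub_mul_of_le_mul_add {γ : ℝ≥0} (hγ : γ < 1) {A R : ℝ≥0∞} (hA : A ≠ ∞)
    (h : A ≤ γ * A + R) : A ≤ ((1 - γ)⁻¹ : ℝ≥0) * R := by
  have hγ' : 1 - γ ≠ 0 := (tsub_pos_of_lt hγ).ne'
  have hsplit : A = γ * A + ((1 - γ : ℝ≥0) : ℝ≥0∞) * A := by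
    rw [← add_mul, ← ENNReal.coe_add, add_tsub_cancel_of_le hγ.le, ENNReal.coe_one, one_mul]
  have hR : ((1 - γ : ℝ≥0) : ℝ≥0∞) * A ≤ R :=
    ENNReal.le_of_add_le_add_left (ENNReal.mul_ne_top ENNReal.coe_ne_top hA)
      (hsplit.symm.le.trans h)
  calc A = ((1 - γ)⁻¹ : ℝ≥0) * (((1 - γ : ℝ≥0) : ℝ≥0∞) * A) := by
        rw [← mul_assoc, ← ENNReal.coe_mul, inv_mul_cancel₀ hγ', ENNReal.coe_one, one_mul]
    _ ≤ ((1 - γ)⁻¹ : ℝ≥0) * R := by gcongr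

variable {E : Type*} [NormedAddCommGroup E] {p : ℝ≥0∞}

theorem StrictlyCausal.pNorm_indicator_Iio_succ_le (hp : 1 ≤ p) {G : (ℕ → E) → (ℕ → E)}
    (hG : StrictlyCausal G) {a : ℕ → E} (ha : Function.IsFixedPt G a) (T : ℕ) :
    pNorm p ((Iio (T + 1)).indicator a) ≤ pNorm p (G ((Iio T).indicator a)) := by
  refine pNorm_mono hp fun t => ?_
  by_cases ht : t < T + 1
  · have hat : a t = G ((Iio T).indicator a) t := (congrFun ha t).symm.trans <| hG _ _ t
      fun s hs => (indicator_of_mem (mem_Iio.2 (hs.trans_le (Nat.lt_succ_iff.1 ht))) a).symm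
    rw [indicator_of_mem (mem_Iio.2 ht), hat]
  · simp [indicator_of_notMem (show t ∉ Iio (T + 1) from ht)]

theorem StrictlyCausal.pNorm_le_of_isFixedPt (hp : 1 ≤ p) {G : (ℕ → E) → (ℕ → E)}
    (hG : StrictlyCausal G) {γ : ℝ≥0} (hγ : γ < 1) {c : ℝ≥0∞} (hc : c ≠ ∞)
    (hGb : ∀ b, pNorm p b < ∞ → pNorm p (G b) ≤ γ * pNorm p b + c)
    {a : ℕ → E} (ha : Function.IsFixedPt G a) : pNorm p a ≤ ((1 - γ)⁻¹ : ℝ≥0) * c := by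
  set M : ℝ≥0∞ := ((1 - γ)⁻¹ : ℝ≥0) * c
  have hM : γ * M + c = M := by
    have h1 : ((1 - γ : ℝ≥0) : ℝ≥0∞) * ((1 - γ)⁻¹ : ℝ≥0) = 1 := by
      rw [← ENNReal.coe_mul, mul_inv_cancel₀ (tsub_pos_of_lt hγ).ne', ENNReal.coe_one]
    have h2 : (γ : ℝ≥0∞) + ((1 - γ : ℝ≥0) : ℝ≥0∞) = 1 := by
      rw [← ENNReal.coe_add, add_tsub_cancel_of_le hγ.le, ENNReal.coe_one]
    calc γ * M + c = γ * M + ((1 - γ : ℝ≥0) : ℝ≥0∞) * ((1 - γ)⁻¹ : ℝ≥0) * c := by rw [h1, one_mul]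
      _ = ((γ : ℝ≥0∞) + ((1 - γ : ℝ≥0) : ℝ≥0∞)) * M := by ring
      _ = M := by rw [h2, one_mul]
  have hM_top : M < ∞ := ENNReal.mul_lt_top ENNReal.coe_lt_top hc.lt_top
  refine pNorm_le_of_forall_indicator_Iio_le hp fun T => ?_
  induction T with
  | zero => simp [← Pi.zero_def, pNorm_zero hp]
  | succ T ih =>
    calc pNorm p ((Iio (T + 1)).indicator a)
        ≤ pNorm p (G ((Iio T).indicator a)) := hG.pNorm_indicator_Iio_succ_le hp ha T
      _ ≤ γ * pNorm p ((Iio T).indicator a) + c := hGb _ (ih.trans_lt hM_top)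
      _ ≤ M := by rw [← hM]; gcongr

end Contraction

section Gain

variable {E U E' : Type*} [NormedAddCommGroup E] [NormedAddCommGroup U] [NormedAddCommGroup E']

def IncrFiniteGain (p : ℝ≥0∞) (T : (ℕ → E) → (ℕ → E')) (γ β : ℝ≥0) : Prop :=
  ∀ a a', pNorm p a < ∞ → pNorm p a' < ∞ → pNorm p (T a - T a') ≤ γ * pNorm p (a - a') + β

def IncrFiniteGain₂ (p : ℝ≥0∞) (F : (ℕ → E) → (ℕ → U) → (ℕ → E')) (γ β : ℝ≥0) : Prop :=
  ∀ x u x' u', pNorm p x < ∞ → pNorm p u < ∞ → pNorm p x' < ∞ → pNorm p u' < ∞ →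
    pNorm p (F x u - F x' u') ≤ γ * (pNorm p (x - x') + pNorm p (u - u')) + β

variable {p : ℝ≥0∞}

theorem pNorm_add_lt_top (hp : 1 ≤ p) {x y : ℕ → E} (hx : pNorm p x < ∞) (hy : pNorm p y < ∞) :
    pNorm p (x + y) < ∞ :=
  (pNorm_add_le hp x y).trans_lt (ENNReal.add_lt_top.2 ⟨hx, hy⟩)

theorem pNorm_sub_lt_top (hp : 1 ≤ p) {x y : ℕ → E} (hx : pNorm p x < ∞) (hy : pNorm p y < ∞) :
    pNorm p (x - y) < ∞ :=
  (pNorm_sub_le hp x y).trans_lt (ENNReal.add_lt_top.2 ⟨hx, hy⟩)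

theorem IncrFiniteGain₂.pNorm_sub_le (hp : 1 ≤ p) {F : (ℕ → E) → (ℕ → U) → (ℕ → E')}
    {γ β : ℝ≥0} (hF : IncrFiniteGain₂ p F γ β) {x v : ℕ → E} {u d : ℕ → U}
    (hx : pNorm p x < ∞) (hv : pNorm p v < ∞) (hu : pNorm p u < ∞) (hd : pNorm p d < ∞) :
    pNorm p (F (x - v) (u + d) - F x u) ≤ γ * (pNorm p v + pNorm p d) + β := by
  simpa [pNorm_neg hp] using
    hF (x - v) (u + d) x u (pNorm_sub_lt_top hp hx hv) (pNorm_add_lt_top hp hu hd) hx hu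

end Gain

section ClosedLoop

variable {E U : Type*} [NormedAddCommGroup E] [NormedAddCommGroup U] {p : ℝ≥0∞}
  (F : (ℕ → E) → (ℕ → U) → (ℕ → E)) (Ψx : (ℕ → E) → (ℕ → E)) (Ψu : (ℕ → E) → (ℕ → U))

def loopResidual (a : ℕ → E) : ℕ → E := fun t => F (Ψx a) (Ψu a) t + a t - Ψx a t

/-- `z` is the paper's `ŵ`. -/
def IsClosedLoop (w : ℕ → E) (d : ℕ → U) (v x : ℕ → E) (u : ℕ → U) (z : ℕ → E) : Prop :=
  (∀ t, x t = F x u t + w t) ∧ (∀ t, z t = x t + v t - (Ψx z t - z t)) ∧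
    (∀ t, u t = Ψu z t + d t)

def closedLoopMap (w : ℕ → E) (d : ℕ → U) (v z : ℕ → E) : ℕ → E :=
  z - Ψx z + F (Ψx z - v) (Ψu z + d) + w + v

variable {F Ψx Ψu} {w : ℕ → E} {d : ℕ → U} {v x : ℕ → E} {u : ℕ → U} {z : ℕ → E}
  {w' : ℕ → E} {d' : ℕ → U} {v' x' : ℕ → E} {u' : ℕ → U} {z' : ℕ → E}

theorem IsClosedLoop.eq_sub (h : IsClosedLoop F Ψx Ψu w d v x u z) : x = Ψx z - v := by
  funext t
  calc x t = (x t + v t - (Ψx z t - z t)) - z t + Ψx z t - v t := by abel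
    _ = Ψx z t - v t := by rw [← h.2.1 t]; abel

theorem IsClosedLoop.isFixedPt (h : IsClosedLoop F Ψx Ψu w d v x u z) :
    Function.IsFixedPt (closedLoopMap F Ψx Ψu w d v) z := by
  have hu : Ψu z + d = u := (funext h.2.2).symm
  funext t
  show z t - Ψx z t + F (Ψx z - v) (Ψu z + d) t + w t + v t = z t
  rw [← h.eq_sub, hu, add_assoc (_ - _) (F x u t), ← h.1 t, h.eq_sub, Pi.sub_apply]
  abel

theorem strictlyCausal_closedLoopMap (hF : StrictlyCausal2 F) (hΨx : Causal Ψx)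
    (hΨu : Causal Ψu) (hΨxI : StrictlyCausal (fun a => Ψx a - a)) :
    StrictlyCausal (closedLoopMap F Ψx Ψu w d v) := by
  intro b b' t hbt
  have hx : ∀ s < t, (Ψx b - v) s = (Ψx b' - v) s := fun s hs => by
    simp only [Pi.sub_apply, hΨx b b' s fun r hr => hbt r (hr.trans_lt hs)]
  have hu : ∀ s < t, (Ψu b + d) s = (Ψu b' + d) s := fun s hs => by
    simp only [Pi.add_apply, hΨu b b' s fun r hr => hbt r (hr.trans_lt hs)]
  have hI : b t - Ψx b t = b' t - Ψx b' t := by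
    simpa only [Pi.sub_apply, neg_sub] using congrArg Neg.neg (hΨxI b b' t hbt)
  simp only [closedLoopMap, Pi.add_apply, Pi.sub_apply, hI, hF _ _ _ _ t hx hu]

theorem pNorm_closedLoopMap_lt_top (hp : 1 ≤ p)
    (hFmap : ∀ x u, pNorm p x < ∞ → pNorm p u < ∞ → pNorm p (F x u) < ∞)
    (hΨmap : ∀ a, pNorm p a < ∞ → pNorm p (Ψx a) < ∞ ∧ pNorm p (Ψu a) < ∞)
    (hw : pNorm p w < ∞) (hd : pNorm p d < ∞) (hv : pNorm p v < ∞) (hz : pNorm p z < ∞) :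
    pNorm p (closedLoopMap F Ψx Ψu w d v z) < ∞ := by
  obtain ⟨hxz, huz⟩ := hΨmap z hz
  have hFz := hFmap _ _ (pNorm_sub_lt_top hp hxz hv) (pNorm_add_lt_top hp huz hd)
  exact pNorm_add_lt_top hp (pNorm_add_lt_top hp
    (pNorm_add_lt_top hp (pNorm_sub_lt_top hp hz hxz) hFz) hw) hv

theorem pNorm_closedLoopMap_sub_le (hp : 1 ≤ p) {γF βF γ β : ℝ≥0}
    (hFifg : IncrFiniteGain₂ p F γF βF)
    (hΨmap : ∀ a, pNorm p a < ∞ → pNorm p (Ψx a) < ∞ ∧ pNorm p (Ψu a) < ∞)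
    (hΔ : IncrFiniteGain p (loopResidual F Ψx Ψu) γ β)
    (hd : pNorm p d < ∞) (hv : pNorm p v < ∞) (hz : pNorm p z < ∞)
    (hd' : pNorm p d' < ∞) (hv' : pNorm p v' < ∞) (hz' : pNorm p z' < ∞) :
    pNorm p (closedLoopMap F Ψx Ψu w d v z - closedLoopMap F Ψx Ψu w' d' v' z') ≤
      γ * pNorm p (z - z') + β +
        ((γF * (pNorm p v + pNorm p d) + βF) + (γF * (pNorm p v' + pNorm p d') + βF)) +
        (pNorm p (w - w') + pNorm p (v - v')) := by
  obtain ⟨hxz, huz⟩ := hΨmap z hz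
  obtain ⟨hxz', huz'⟩ := hΨmap z' hz'
  set M := F (Ψx z - v) (Ψu z + d) - F (Ψx z) (Ψu z)
  set M' := F (Ψx z' - v') (Ψu z' + d') - F (Ψx z') (Ψu z')
  have hsplit : closedLoopMap F Ψx Ψu w d v z - closedLoopMap F Ψx Ψu w' d' v' z' =
      (loopResidual F Ψx Ψu z - loopResidual F Ψx Ψu z') + (M - M') + ((w - w') + (v - v')) := by
    funext t
    simp only [M, M', closedLoopMap, loopResidual, Pi.add_apply, Pi.sub_apply]
    abel
  calc _ ≤ pNorm p (loopResidual F Ψx Ψu z - loopResidual F Ψx Ψu z') + (pNorm p M + pNorm p M')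
        + (pNorm p (w - w') + pNorm p (v - v')) := by
        rw [hsplit]
        exact (pNorm_add_le hp _ _).trans (add_le_add ((pNorm_add_le hp _ _).trans
          (add_le_add_right (pNorm_sub_le hp _ _) _)) (pNorm_add_le hp _ _))
    _ ≤ _ := by
        gcongr
        · exact hΔ z z' hz hz'
        · exact hFifg.pNorm_sub_le hp hxz hv huz hd
        · exact hFifg.pNorm_sub_le hp hxz' hv' huz' hd'

theorem IsClosedLoop.pNorm_lt_top (hp : 1 ≤ p) (hF : StrictlyCausal2 F) (hΨx : Causal Ψx)
    (hΨu : Causal Ψu) (hΨxI : StrictlyCausal (fun a => Ψx a - a)) {γF βF γ β : ℝ≥0}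
    (hFmap : ∀ x u, pNorm p x < ∞ → pNorm p u < ∞ → pNorm p (F x u) < ∞)
    (hFifg : IncrFiniteGain₂ p F γF βF)
    (hΨmap : ∀ a, pNorm p a < ∞ → pNorm p (Ψx a) < ∞ ∧ pNorm p (Ψu a) < ∞)
    (hΔ : IncrFiniteGain p (loopResidual F Ψx Ψu) γ β) (hγ : γ < 1)
    (hw : pNorm p w < ∞) (hd : pNorm p d < ∞) (hv : pNorm p v < ∞)
    (h : IsClosedLoop F Ψx Ψu w d v x u z) : pNorm p z < ∞ := by
  have h0 : pNorm p (0 : ℕ → E) < ∞ := by simp [pNorm_zero hp]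
  have h0' : pNorm p (0 : ℕ → U) < ∞ := by simp [pNorm_zero hp]
  set G₀ := closedLoopMap F Ψx Ψu 0 0 0 (0 : ℕ → E)
  set c : ℝ≥0∞ := β + ((γF * (pNorm p v + pNorm p d) + βF) + βF) + (pNorm p w + pNorm p v) +
    pNorm p G₀
  have hG₀ : pNorm p G₀ < ∞ := pNorm_closedLoopMap_lt_top hp hFmap hΨmap h0 h0' h0 h0
  have hc : c ≠ ∞ := by
    simp [c, ENNReal.add_eq_top, ENNReal.mul_eq_top, hw.ne, hd.ne, hv.ne, hG₀.ne]
  have hG : ∀ b, pNorm p b < ∞ → pNorm p (closedLoopMap F Ψx Ψu w d v b) ≤ γ * pNorm p b + c := by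
    intro b hb
    calc pNorm p (closedLoopMap F Ψx Ψu w d v b)
        = pNorm p ((closedLoopMap F Ψx Ψu w d v b - G₀) + G₀) := by rw [sub_add_cancel]
      _ ≤ pNorm p (closedLoopMap F Ψx Ψu w d v b - G₀) + pNorm p G₀ := pNorm_add_le hp _ _
      _ ≤ _ := add_le_add_left
          (pNorm_closedLoopMap_sub_le hp hFifg hΨmap hΔ hd hv hb h0' h0 h0) _
      _ = γ * pNorm p b + c := by simp only [c, sub_zero, pNorm_zero hp, add_zero, mul_zero]; ring
  have hz := (strictlyCausal_closedLoopMap hF hΨx hΨu hΨxI).pNorm_le_of_isFixedPt hp hγ hc hG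
    h.isFixedPt
  exact hz.trans_lt (ENNReal.mul_lt_top ENNReal.coe_lt_top hc.lt_top)

theorem IsClosedLoop.pNorm_internal_sub_le (hp : 1 ≤ p) {γF βF γ β : ℝ≥0}
    (hFifg : IncrFiniteGain₂ p F γF βF)
    (hΨmap : ∀ a, pNorm p a < ∞ → pNorm p (Ψx a) < ∞ ∧ pNorm p (Ψu a) < ∞)
    (hΔ : IncrFiniteGain p (loopResidual F Ψx Ψu) γ β) (hγ : γ < 1)
    (h : IsClosedLoop F Ψx Ψu w d v x u z) (h' : IsClosedLoop F Ψx Ψu w' d' v' x' u' z')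
    (hd : pNorm p d < ∞) (hv : pNorm p v < ∞) (hz : pNorm p z < ∞)
    (hd' : pNorm p d' < ∞) (hv' : pNorm p v' < ∞) (hz' : pNorm p z' < ∞) :
    pNorm p (z - z') ≤ ((1 - γ)⁻¹ : ℝ≥0) * (β +
        ((γF * (pNorm p v + pNorm p d) + βF) + (γF * (pNorm p v' + pNorm p d') + βF)) +
        (pNorm p (w - w') + pNorm p (v - v'))) := by
  refine le_inv_one_sub_mul_of_le_mul_add hγ (pNorm_sub_lt_top hp hz hz').ne ?_
  have := pNorm_closedLoopMap_sub_le (w := w) (w' := w') hp hFifg hΨmap hΔ hd hv hz hd' hv' hz'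
  rw [h.isFixedPt, h'.isFixedPt] at this
  simpa only [add_assoc] using this

theorem IsClosedLoop.pNorm_trajectory_sub_le (hp : 1 ≤ p) {γΨ βΨ : ℝ≥0}
    (hΨifg : ∀ a a', pNorm p a < ∞ → pNorm p a' < ∞ →
      pNorm p (Ψx a - Ψx a') + pNorm p (Ψu a - Ψu a') ≤ γΨ * pNorm p (a - a') + βΨ)
    (h : IsClosedLoop F Ψx Ψu w d v x u z) (h' : IsClosedLoop F Ψx Ψu w' d' v' x' u' z')
    (hz : pNorm p z < ∞) (hz' : pNorm p z' < ∞) :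
    pNorm p (x - x') + pNorm p (u - u') + pNorm p (z - z') ≤
      (γΨ + 1) * pNorm p (z - z') + βΨ + (pNorm p (d - d') + pNorm p (v - v')) := by
  have hx : x - x' = (Ψx z - Ψx z') - (v - v') := by rw [h.eq_sub, h'.eq_sub]; abel
  have hu : u - u' = (Ψu z - Ψu z') + (d - d') := by
    rw [funext h.2.2, funext h'.2.2]; funext t; simp only [Pi.add_apply, Pi.sub_apply]; abel
  calc _ ≤ (pNorm p (Ψx z - Ψx z') + pNorm p (v - v')) + (pNorm p (Ψu z - Ψu z') + pNorm p (d - d'))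
        + pNorm p (z - z') := by
        rw [hx, hu]
        gcongr
        exacts [pNorm_sub_le hp (Ψx z - Ψx z') (v - v'), pNorm_add_le hp (Ψu z - Ψu z') (d - d')]
    _ = (pNorm p (Ψx z - Ψx z') + pNorm p (Ψu z - Ψu z')) + pNorm p (z - z') +
        (pNorm p (d - d') + pNorm p (v - v')) := by ring
    _ ≤ (γΨ * pNorm p (z - z') + βΨ) + pNorm p (z - z') + _ :=
        add_le_add (add_le_add (hΨifg z z' hz hz') le_rfl) le_rfl
    _ = _ := by ring

theorem IsClosedLoop.pNorm_sub_le_of_nominal (hp : 1 ≤ p) {γF βF γΨ βΨ γ β : ℝ≥0}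
    (hFifg : IncrFiniteGain₂ p F γF βF)
    (hΨmap : ∀ a, pNorm p a < ∞ → pNorm p (Ψx a) < ∞ ∧ pNorm p (Ψu a) < ∞)
    (hΨifg : ∀ a a', pNorm p a < ∞ → pNorm p a' < ∞ →
      pNorm p (Ψx a - Ψx a') + pNorm p (Ψu a - Ψu a') ≤ γΨ * pNorm p (a - a') + βΨ)
    (hΔ : IncrFiniteGain p (loopResidual F Ψx Ψu) γ β) (hγ : γ < 1)
    (h : IsClosedLoop F Ψx Ψu w d v x u z) (h' : IsClosedLoop F Ψx Ψu w' d' v' x' u' z')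
    (hd : pNorm p d < ∞) (hv : pNorm p v < ∞) (hz : pNorm p z < ∞)
    (hd' : pNorm p d' < ∞) (hv' : pNorm p v' < ∞) (hz' : pNorm p z' < ∞) :
    pNorm p (x - x') + pNorm p (u - u') + pNorm p (z - z') ≤
      ((γΨ + 1) * ((1 - γ)⁻¹ : ℝ≥0) * (γF + 1) + 1) *
          (pNorm p (w - w') + pNorm p (d - d') + pNorm p (v - v')) +
        ((γΨ + 1) * ((1 - γ)⁻¹ : ℝ≥0) * (β + 2 * (γF * (pNorm p v' + pNorm p d') + βF)) + βΨ) := by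
  set N := pNorm p v' + pNorm p d'
  set D := pNorm p (w - w') + pNorm p (d - d') + pNorm p (v - v') with hD
  have hwv : pNorm p (w - w') + pNorm p (v - v') ≤ D := add_le_add le_self_add le_rfl
  have hdv : pNorm p (d - d') + pNorm p (v - v') ≤ D := by rw [hD, add_assoc]; exact le_add_self
  have hvd : pNorm p v + pNorm p d ≤ D + N := by
    calc pNorm p v + pNorm p d
        ≤ (pNorm p (v - v') + pNorm p v') + (pNorm p (d - d') + pNorm p d') :=
          add_le_add (pNorm_le_sub_add hp v v') (pNorm_le_sub_add hp d d')
      _ = (pNorm p (d - d') + pNorm p (v - v')) + N := by ring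
      _ ≤ D + N := by gcongr
  calc _ ≤ (γΨ + 1) * pNorm p (z - z') + βΨ + (pNorm p (d - d') + pNorm p (v - v')) :=
        h.pNorm_trajectory_sub_le hp hΨifg h' hz hz'
    _ ≤ (γΨ + 1) * (((1 - γ)⁻¹ : ℝ≥0) * (β + ((γF * (D + N) + βF) + (γF * N + βF)) + D)) +
          βΨ + D := by
        gcongr
        refine (h.pNorm_internal_sub_le hp hFifg hΨmap hΔ hγ h' hd hv hz hd' hv' hz').trans ?_
        gcongr
    _ = _ := by ring

end ClosedLoop

/-- robust stability: if `F` and `Ψ = (Ψˣ,Ψᵘ)` are incrementally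
finite-gain `ℓ_p`-stable and the residual `Δ[F,Ψ] = F(Ψ) + I - Ψˣ` is `(γ,β)`-i.f.g. with
`γ < 1`, then the perturbed closed-loop map `(w,d,v) ↦ (x,u,ŵ)` of the system-level
controller is finite-gain `ℓ_p`-stable at every nominal perturbation `δ* ∈ ℓ_p`
(using the sum of component norms on product spaces). -/
theorem robust_stability {E U : Type*} [NormedAddCommGroup E] [NormedAddCommGroup U]
    (p : ℝ≥0∞) (hp : 1 ≤ p)
    (F : (ℕ → E) → (ℕ → U) → (ℕ → E))
    (Ψx : (ℕ → E) → (ℕ → E)) (Ψu : (ℕ → E) → (ℕ → U))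
    (hF : StrictlyCausal2 F) (hΨx : Causal Ψx) (hΨu : Causal Ψu)
    (hΨxI : StrictlyCausal (fun a => Ψx a - a))
    -- F is incrementally finite-gain ℓ_p-stable:
    (γF βF : ℝ≥0)
    (hFmap : ∀ x u, pNorm p x < ∞ → pNorm p u < ∞ → pNorm p (F x u) < ∞)
    (hFifg : ∀ x u x' u', pNorm p x < ∞ → pNorm p u < ∞ →
        pNorm p x' < ∞ → pNorm p u' < ∞ →
      pNorm p (F x u - F x' u')
        ≤ γF * (pNorm p (x - x') + pNorm p (u - u')) + βF)
    -- Ψ is incrementally finite-gain ℓ_p-stable: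
    (γΨ βΨ : ℝ≥0)
    (hΨmap : ∀ a, pNorm p a < ∞ → pNorm p (Ψx a) < ∞ ∧ pNorm p (Ψu a) < ∞)
    (hΨifg : ∀ a a', pNorm p a < ∞ → pNorm p a' < ∞ →
      pNorm p (Ψx a - Ψx a') + pNorm p (Ψu a - Ψu a')
        ≤ γΨ * pNorm p (a - a') + βΨ)
    -- the residual Δ[F,Ψ] = F(Ψ) + I - Ψˣ is (γ,β)-i.f.g. with γ < 1:
    (γ β : ℝ≥0) (hγ : γ < 1)
    (hΔifg : ∀ a a', pNorm p a < ∞ → pNorm p a' < ∞ →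
      pNorm p ((fun t => F (Ψx a) (Ψu a) t + a t - Ψx a t)
          - (fun t => F (Ψx a') (Ψu a') t + a' t - Ψx a' t))
        ≤ γ * pNorm p (a - a') + β) :
    -- conclusion: f.g. ℓ_p-stability at any nominal perturbation δ* = (ws,ds,vs):
    ∀ (ws : ℕ → E) (ds : ℕ → U) (vs : ℕ → E),
      pNorm p ws < ∞ → pNorm p ds < ∞ → pNorm p vs < ∞ →
      ∃ γ' β' : ℝ≥0,
        ∀ (w : ℕ → E) (d : ℕ → U) (v : ℕ → E)
          (xs : ℕ → E) (us : ℕ → U) (hws : ℕ → E)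
          (x : ℕ → E) (u : ℕ → U) (hw : ℕ → E),
          pNorm p w < ∞ → pNorm p d < ∞ → pNorm p v < ∞ →
          ((∀ t, xs t = F xs us t + ws t) ∧
            (∀ t, hws t = xs t + vs t - (Ψx hws t - hws t)) ∧
            (∀ t, us t = Ψu hws t + ds t)) →
          ((∀ t, x t = F x u t + w t) ∧
            (∀ t, hw t = x t + v t - (Ψx hw t - hw t)) ∧
            (∀ t, u t = Ψu hw t + d t)) →
          pNorm p (x - xs) + pNorm p (u - us) + pNorm p (hw - hws)
            ≤ γ' * (pNorm p (w - ws) + pNorm p (d - ds) + pNorm p (v - vs)) + β' := by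
  intro ws ds vs hws hds hvs
  have hN : pNorm p vs + pNorm p ds ≠ ∞ := (ENNReal.add_lt_top.2 ⟨hvs, hds⟩).ne
  set K : ℝ≥0 := (1 - γ)⁻¹
  refine ⟨(γΨ + 1) * K * (γF + 1) + 1,
    (γΨ + 1) * K * (β + 2 * (γF * (pNorm p vs + pNorm p ds).toNNReal + βF)) + βΨ,
    fun w d v xs us zs x u z hw hd hv hS h => ?_⟩
  have hzs := IsClosedLoop.pNorm_lt_top hp hF hΨx hΨu hΨxI hFmap hFifg hΨmap hΔifg hγ
    hws hds hvs hS
  have hz := IsClosedLoop.pNorm_lt_top hp hF hΨx hΨu hΨxI hFmap hFifg hΨmap hΔifg hγ hw hd hv h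
  have := IsClosedLoop.pNorm_sub_le_of_nominal hp hFifg hΨmap hΨifg hΔifg hγ h hS
    hd hv hz hds hvs hzs
  push_cast [ENNReal.coe_toNNReal hN]
  exact this
end

section
/- In the perturbed closed loop x = F(x,u) + w, ŵ = x + v - (Ψˣ - I)(ŵ), u = Ψᵘ(ŵ) + d (system level controller structure), the identities x = Ψˣ(ŵ) - v and u = Ψᵘ(ŵ) + d hold for all trajectories, and consequently the internal state satisfies ŵ = Δ[F,Ψ](ŵ) + ε, where Δ[F,Ψ] = F(Ψ) + I - Ψˣ and ε = F(Ψ(ŵ) - (v, -d)) - F(Ψ(ŵ)) + w + v. -/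
/-- in the perturbed closed loop `x = F(x,u) + w`,
`ŵ = x + v - (Ψˣ - I)(ŵ)`, `u = Ψᵘ(ŵ) + d`, the identities `x = Ψˣ(ŵ) - v` and
`u = Ψᵘ(ŵ) + d` hold, and consequently `ŵ = Δ[F,Ψ](ŵ) + ε` with
`Δ[F,Ψ] = F(Ψ) + I - Ψˣ` and `ε = F(Ψ(ŵ) - (v,-d)) - F(Ψ(ŵ)) + w + v`. -/
theorem SL_controller_identities {n m : ℕ}
    (F : (ℕ → Fin n → ℝ) → (ℕ → Fin m → ℝ) → (ℕ → Fin n → ℝ))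
    (Ψx : (ℕ → Fin n → ℝ) → (ℕ → Fin n → ℝ))
    (Ψu : (ℕ → Fin n → ℝ) → (ℕ → Fin m → ℝ))
    (hF : StrictlyCausal2 F) (hΨx : Causal Ψx) (hΨu : Causal Ψu)
    (hΨxI : StrictlyCausal (fun a => Ψx a - a))
    (w v x hw : ℕ → Fin n → ℝ) (d u : ℕ → Fin m → ℝ)
    (h1 : ∀ t, x t = F x u t + w t)
    (h2 : ∀ t, hw t = x t + v t - (Ψx hw t - hw t))
    (h3 : ∀ t, u t = Ψu hw t + d t) :
    (∀ t, x t = Ψx hw t - v t) ∧ (∀ t, u t = Ψu hw t + d t) ∧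
    (∀ t, hw t = (F (Ψx hw) (Ψu hw) t + hw t - Ψx hw t)
        + (F (fun s => Ψx hw s - v s) (fun s => Ψu hw s + d s) t
            - F (Ψx hw) (Ψu hw) t + w t + v t)) := by
  have hx : ∀ t, x t = Ψx hw t - v t := by
    intro t
    funext i
    have h := congrFun (h2 t) i
    simp only [Pi.add_apply, Pi.sub_apply] at h ⊢
    linarith
  refine ⟨hx, h3, fun t => ?_⟩
  have hFeq : F x u t = F (fun s => Ψx hw s - v s) (fun s => Ψu hw s + d s) t := by
    have e1 : x = fun s => Ψx hw s - v s := funext hx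
    have e2 : u = fun s => Ψu hw s + d s := funext h3
    rw [e1, e2]
  funext i
  have h := congrFun (h2 t) i
  have h1' := congrFun (h1 t) i
  have hF' := congrFun hFeq i
  simp only [Pi.add_apply, Pi.sub_apply] at *
  linarith
end

section
/- (Blending lemma) Let F : ℓⁿ × ℓᵐ → ℓⁿ be linear and strictly causal, and let (Rⁱ, Mⁱ), i = 1..N, be linear causal achievable closed-loop maps of F (each satisfying Rⁱ = F(Rⁱ, Mⁱ) + I with Rⁱ - I strictly causal). Let Gⁱ : ℓⁿ → ℓⁿ be (possibly nonlinear) causal operators with Σ_{i=1}^N Gⁱ = I. Then Ψˣ = I + Σᵢ (Rⁱ - I)∘Gⁱ and Ψᵘ = Σᵢ Mⁱ∘Gⁱ define an achievable closed-loop map of F, i.e. Ψˣ = F(Ψˣ, Ψᵘ) + I. -/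
theorem map_sum_of_map_add {ι X U Y : Type*} [AddCommMonoid X] [AddCommMonoid U] [AddCommGroup Y]
    (F : X → U → Y) (hF : ∀ x x' u u', F (x + x') (u + u') = F x u + F x' u')
    (s : Finset ι) (x : ι → X) (u : ι → U) :
    F (∑ i ∈ s, x i) (∑ i ∈ s, u i) = ∑ i ∈ s, F (x i) (u i) := by
  have := map_sum (AddMonoidHom.mk' (fun p : X × U => F p.1 p.2) fun p q => hF _ _ _ _)
    (fun i => (x i, u i)) s
  simpa only [AddMonoidHom.mk'_apply, Prod.fst_sum, Prod.snd_sum] using this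

theorem blending_lemma_general {n m : ℕ}
    (F : (ℕ → Fin n → ℝ) → (ℕ → Fin m → ℝ) → (ℕ → Fin n → ℝ))
    (hFadd : ∀ x x' u u', F (x + x') (u + u') = F x u + F x' u')
    (N : ℕ)
    (R : Fin N → (ℕ → Fin n → ℝ) → (ℕ → Fin n → ℝ))
    (M : Fin N → (ℕ → Fin n → ℝ) → (ℕ → Fin m → ℝ))
    (G : Fin N → (ℕ → Fin n → ℝ) → (ℕ → Fin n → ℝ))
    (hCLM : ∀ i w, R i w = F (R i w) (M i w) + w)
    (hGsum : ∀ w, ∑ i, G i w = w) :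
    ∀ w, w + ∑ i, (R i (G i w) - G i w)
      = F (w + ∑ i, (R i (G i w) - G i w)) (∑ i, M i (G i w)) + w := by
  intro w
  have hblend : w + ∑ i, (R i (G i w) - G i w) = ∑ i, R i (G i w) := by
    rw [Finset.sum_sub_distrib, hGsum]
    abel
  have hF_blocks : ∀ i, F (R i (G i w)) (M i (G i w)) = R i (G i w) - G i w :=
    fun i => eq_sub_of_add_eq (hCLM i (G i w)).symm
  rw [hblend, map_sum_of_map_add F hFadd, Finset.sum_congr rfl fun i _ => hF_blocks i,
    Finset.sum_sub_distrib, hGsum, sub_add_cancel]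

/-- blending lemma: for a linear, strictly causal plant `F`, linear causal
achievable closed-loop maps `(Rⁱ,Mⁱ)` of `F`, and (possibly nonlinear) causal operators
`Gⁱ` with `Σᵢ Gⁱ = I`, the maps `Ψˣ = I + Σᵢ (Rⁱ - I)∘Gⁱ`, `Ψᵘ = Σᵢ Mⁱ∘Gⁱ` satisfy the
CLM equation `Ψˣ = F(Ψˣ,Ψᵘ) + I`, hence define an achievable closed-loop map of `F`. -/
theorem blending_lemma {n m : ℕ}
    (F : (ℕ → Fin n → ℝ) → (ℕ → Fin m → ℝ) → (ℕ → Fin n → ℝ))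
    (hF : StrictlyCausal2 F)
    (hFadd : ∀ x x' u u', F (x + x') (u + u') = F x u + F x' u')
    (hFsmul : ∀ (c : ℝ) x u, F (c • x) (c • u) = c • F x u)
    (N : ℕ)
    (R : Fin N → (ℕ → Fin n → ℝ) → (ℕ → Fin n → ℝ))
    (M : Fin N → (ℕ → Fin n → ℝ) → (ℕ → Fin m → ℝ))
    (G : Fin N → (ℕ → Fin n → ℝ) → (ℕ → Fin n → ℝ))
    (hRcausal : ∀ i, Causal (R i)) (hMcausal : ∀ i, Causal (M i))
    (hGcausal : ∀ i, Causal (G i))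
    (hRadd : ∀ i x x', R i (x + x') = R i x + R i x')
    (hRsmul : ∀ i (c : ℝ) x, R i (c • x) = c • R i x)
    (hMadd : ∀ i x x', M i (x + x') = M i x + M i x')
    (hMsmul : ∀ i (c : ℝ) x, M i (c • x) = c • M i x)
    (hRI : ∀ i, StrictlyCausal (fun a => R i a - a))
    (hCLM : ∀ i w, R i w = F (R i w) (M i w) + w)
    (hGsum : ∀ w, ∑ i, G i w = w) :
    ∀ w, w + ∑ i, (R i (G i w) - G i w)
      = F (w + ∑ i, (R i (G i w) - G i w)) (∑ i, M i (G i w)) + w :=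
  blending_lemma_general F hFadd N R M G hCLM hGsum
end

section
/- If a sequence ŵ ∈ ℓⁿ_p with p < ∞, and η̄ > 0 is such that the ball B_η̄ is contained in W, then there exists a time t̄ such that for all t > t̄, ŵ_t - sat(ŵ_t|W) = 0. Consequently, in the blended system-level controller where x_t = R_t(sat(ŵ)) + R'_t(ŵ - sat(ŵ)) with R' of finite memory T̄ (R'_{t,k} = 0 for k > T̄+1) and R mapping sequences in W into the set X, one has x_t ∈ X for all t > t̄ + T̄ + 1. -/
open scoped ENNReal NNReal

/-- if `ŵ ∈ ℓ_p` with `p < ∞`, and `W` contains the ball of radius `η̄ > 0`,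
then eventually `ŵ_t - sat(ŵ_t|W) = 0`; consequently, if
`x_t = R_t(sat(ŵ)) + R'_t(ŵ - sat(ŵ))` with `R'` of finite memory `T̄` (its t-th output
vanishes if the input vanishes on indices `≥ t - T̄`) and `R` mapping `W`-valued sequences
into `X`, then `x_t ∈ X` for all `t > t̄ + T̄ + 1`. -/
theorem eventual_constraint_satisfaction {n : ℕ}
    (p : ℝ≥0∞) (hp : 1 ≤ p) (hpfin : p ≠ ∞)
    (W X : Set (EuclideanSpace ℝ (Fin n)))
    (η : ℝ) (hη : 0 < η) (hball : Metric.ball (0 : EuclideanSpace ℝ (Fin n)) η ⊆ W)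
    (sat : EuclideanSpace ℝ (Fin n) → EuclideanSpace ℝ (Fin n))
    (hsat : ∀ v, sat v ∈ W ∧ ∀ v', v + v' ∈ W → ‖sat v - v‖ ≤ ‖v'‖)
    (hw : ℕ → EuclideanSpace ℝ (Fin n)) (hwlp : pNorm p hw < ∞)
    (T : ℕ)
    (R R' : (ℕ → EuclideanSpace ℝ (Fin n)) → (ℕ → EuclideanSpace ℝ (Fin n)))
    (hRcausal : Causal R) (hR'causal : Causal R')
    (hRadd : ∀ z z', R (z + z') = R z + R z')
    (hR'add : ∀ z z', R' (z + z') = R' z + R' z')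
    (hRX : ∀ z, (∀ t, z t ∈ W) → ∀ t, R z t ∈ X)
    (hR'mem : ∀ z t, (∀ s, t ≤ s + T → z s = 0) → R' z t = 0) :
    ∃ tb : ℕ,
      (∀ t, tb < t → hw t - sat (hw t) = 0) ∧
      (∀ t, tb + T + 1 < t →
        R (fun s => sat (hw s)) t + R' (fun s => hw s - sat (hw s)) t ∈ X) := by
  -- Step 1: the norms of `hw` eventually fall below `η`.
  set q := p.toReal with hq
  have hq0 : 0 < q := ENNReal.toReal_pos (by intro h; simp [h] at hp) hpfin
  rw [pNorm, if_neg hpfin] at hwlp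
  have htsum : ∑' k, (‖hw k‖₊ : ℝ≥0∞) ^ q ≠ ∞ := by
    intro h
    rw [h, ENNReal.top_rpow_of_pos (by positivity)] at hwlp
    exact absurd hwlp (lt_irrefl _)
  have htend := ENNReal.tendsto_atTop_zero_of_tsum_ne_top htsum
  have hlt : ∀ᶠ k in Filter.atTop, (‖hw k‖₊ : ℝ≥0∞) ^ q < (η.toNNReal : ℝ≥0∞) ^ q := by
    apply htend.eventually_lt_const
    exact ENNReal.rpow_pos (by simpa using hη) (by simp)
  obtain ⟨tb, htb⟩ := Filter.eventually_atTop.mp hlt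
  have hsmall : ∀ t, tb < t → ‖hw t‖ < η := by
    intro t ht
    have := (ENNReal.rpow_lt_rpow_iff hq0).mp (htb t ht.le)
    have h2 : (‖hw t‖₊ : ℝ≥0) < η.toNNReal := by exact_mod_cast this
    calc ‖hw t‖ = (‖hw t‖₊ : ℝ) := rfl
      _ < (η.toNNReal : ℝ) := by exact_mod_cast h2
      _ ≤ η := by simp [Real.coe_toNNReal', le_of_lt hη, le_max_left]
  -- Step 2: eventually `sat` is the identity on `hw t`.
  have hzero : ∀ t, tb < t → hw t - sat (hw t) = 0 := by
    intro t ht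
    have hmem : hw t ∈ W := hball (by simpa [Metric.mem_ball] using hsmall t ht)
    have := (hsat (hw t)).2 0 (by simpa using hmem)
    have h0 : sat (hw t) - hw t = 0 := by
      have : ‖sat (hw t) - hw t‖ ≤ 0 := by simpa using this
      simpa using norm_le_zero_iff.mp this
    have : sat (hw t) = hw t := sub_eq_zero.mp h0
    simp [this]
  refine ⟨tb, hzero, ?_⟩
  intro t ht
  have hR'0 : R' (fun s => hw s - sat (hw s)) t = 0 := by
    apply hR'mem
    intro s hs
    apply hzero
    omega
  rw [hR'0, add_zero]
  exact hRX _ (fun s => (hsat (hw s)).1) t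
end
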